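/- arXiv:2503.18515 — 2 statements merged into one kernel-verified Lean document; each statement's English description precedes it below -/
import Mathlib

section
/- Let X, Y, Z, W be jointly Gaussian real random variables each with mean zero. Then E[XYZW] = E[XY]·E[ZW] + E[XZ]·E[YW] + E[XW]·E[YZ] (Isserlis' formula for four centered jointly Gaussian variables). -/
/-!
Every combination `L = a X + b Y + c Z + d W` is a centered Gaussian, so `E[L⁴] = 3 E[L²]²`:
the fourth derivative at `0` of its moment generating function `exp (v t² / 2)` is `3 v²`.
By polarization, `192 XYZW` is a signed sum of eight such fourth powers with coefficients `±1`,
and `E[L²]` is the quadratic form of the covariances, so the identity reduces to a polynomial one.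
Gaussian variables have moments of all orders, which makes every integral involved finite.
-/

open MeasureTheory ProbabilityTheory
open scoped NNReal ENNReal

lemma deriv_mul_exp_half_mul_sq (v : ℝ) {p p' q : ℝ → ℝ} (hp : ∀ t, HasDerivAt p (p' t) t)
    (hq : ∀ t, q t = p' t + v * t * p t) :
    deriv (fun s => p s * Real.exp (v * s ^ 2 / 2)) = fun t => q t * Real.exp (v * t ^ 2 / 2) := by
  funext t
  have h : HasDerivAt (fun s => v * s ^ 2 / 2) (v * t) t :=
    (((hasDerivAt_pow 2 t).const_mul v).div_const 2).congr_deriv (by simp; ring)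
  rw [((hp t).fun_mul h.exp).deriv, hq]
  ring

lemma iteratedDeriv_four_exp_half_mul_sq_zero (v : ℝ) :
    iteratedDeriv 4 (fun t => Real.exp (v * t ^ 2 / 2)) 0 = 3 * v ^ 2 := by
  have d1 := deriv_mul_exp_half_mul_sq v (p := fun _ => 1) (q := fun t => v * t)
    (fun t => hasDerivAt_const t 1) (fun t => by ring)
  have d2 := deriv_mul_exp_half_mul_sq v (p := fun t => v * t) (q := fun t => v + v ^ 2 * t ^ 2)
    (fun t => (hasDerivAt_id' t).const_mul v) (fun t => by ring)
  have d3 := deriv_mul_exp_half_mul_sq v (p := fun t => v + v ^ 2 * t ^ 2)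
    (q := fun t => 3 * v ^ 2 * t + v ^ 3 * t ^ 3)
    (fun t => ((hasDerivAt_pow 2 t).const_mul (v ^ 2)).const_add v) (fun t => by simp; ring)
  have d4 := deriv_mul_exp_half_mul_sq v (p := fun t => 3 * v ^ 2 * t + v ^ 3 * t ^ 3)
    (q := fun t => 3 * v ^ 2 + 6 * v ^ 3 * t ^ 2 + v ^ 4 * t ^ 4)
    (fun t => ((hasDerivAt_id' t).const_mul (3 * v ^ 2)).add
      ((hasDerivAt_pow 3 t).const_mul (v ^ 3)))
    (fun t => by simp; ring)
  simp only [one_mul] at d1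
  simp only [iteratedDeriv_succ', iteratedDeriv_zero, d1, d2, d3, d4]
  simp

lemma integral_pow_four_gaussianReal (v : ℝ≥0) :
    ∫ x, x ^ 4 ∂gaussianReal 0 v = 3 * (v : ℝ) ^ 2 := by
  calc ∫ x, x ^ 4 ∂gaussianReal 0 v
      = iteratedDeriv 4 (mgf (fun x => x) (gaussianReal 0 v)) 0 := by
        rw [iteratedDeriv_mgf_zero (by simp)]; rfl
    _ = 3 * (v : ℝ) ^ 2 := by
        simpa [mgf_fun_id_gaussianReal] using iteratedDeriv_four_exp_half_mul_sq_zero v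

lemma integral_sq_gaussianReal (v : ℝ≥0) : ∫ x, x ^ 2 ∂gaussianReal 0 v = v := by
  simpa using (variance_of_integral_eq_zero (μ := gaussianReal 0 v) (X := fun x => x)
    aemeasurable_id' (by simp)).symm

section RandomVariables

variable {Ω : Type*} [MeasurableSpace Ω] {P : Measure Ω}

lemma memLp_of_map_eq_gaussianReal {S : Ω → ℝ} {μ : ℝ} {v : ℝ≥0}
    (h : P.map S = gaussianReal μ v) {p : ℝ≥0∞} (hp : p ≠ ∞) : MemLp S p P :=
  have : IsGaussian (P.map S) := by rw [h]; infer_instance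
  IsGaussian.hasGaussianLaw.memLp hp

lemma integral_pow_four_eq_three_mul_sq_of_map_eq_gaussianReal {S : Ω → ℝ} {v : ℝ≥0}
    (h : P.map S = gaussianReal 0 v) : ∫ ω, S ω ^ 4 ∂P = 3 * (∫ ω, S ω ^ 2 ∂P) ^ 2 := by
  have hS : AEMeasurable S P := .of_map_ne_zero (by rw [h]; exact IsProbabilityMeasure.ne_zero _)
  rw [← integral_map (f := fun x => x ^ 4) hS (by fun_prop),
    ← integral_map (f := fun x => x ^ 2) hS (by fun_prop), h,
    integral_pow_four_gaussianReal, integral_sq_gaussianReal]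

lemma MemLp.integrable_pow_of_even {f : Ω → ℝ} {n : ℕ} (hn : Even n) (hn₀ : n ≠ 0)
    (hf : MemLp f n P) : Integrable (fun ω => f ω ^ n) P := by
  simpa [Real.norm_eq_abs, hn.pow_abs] using hf.integrable_norm_pow hn₀

variable {X Y Z W : Ω → ℝ}

lemma integral_sq_linear_combination (hX : MemLp X 2 P) (hY : MemLp Y 2 P) (hZ : MemLp Z 2 P)
    (hW : MemLp W 2 P) (a b c d : ℝ) :
    ∫ ω, (a * X ω + b * Y ω + c * Z ω + d * W ω) ^ 2 ∂P =
      a ^ 2 * ∫ ω, X ω ^ 2 ∂P + b ^ 2 * ∫ ω, Y ω ^ 2 ∂P +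
        c ^ 2 * ∫ ω, Z ω ^ 2 ∂P + d ^ 2 * ∫ ω, W ω ^ 2 ∂P +
      2 * a * b * ∫ ω, X ω * Y ω ∂P + 2 * a * c * ∫ ω, X ω * Z ω ∂P +
        2 * a * d * ∫ ω, X ω * W ω ∂P + 2 * b * c * ∫ ω, Y ω * Z ω ∂P +
        2 * b * d * ∫ ω, Y ω * W ω ∂P + 2 * c * d * ∫ ω, Z ω * W ω ∂P := by
  have := hX.integrable_sq
  have := hY.integrable_sq
  have := hZ.integrable_sq
  have := hW.integrable_sq
  have : Integrable (fun ω => X ω * Y ω) P := hX.integrable_mul hY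
  have : Integrable (fun ω => X ω * Z ω) P := hX.integrable_mul hZ
  have : Integrable (fun ω => X ω * W ω) P := hX.integrable_mul hW
  have : Integrable (fun ω => Y ω * Z ω) P := hY.integrable_mul hZ
  have : Integrable (fun ω => Y ω * W ω) P := hY.integrable_mul hW
  have : Integrable (fun ω => Z ω * W ω) P := hZ.integrable_mul hW
  calc ∫ ω, (a * X ω + b * Y ω + c * Z ω + d * W ω) ^ 2 ∂P
      = ∫ ω, a ^ 2 * X ω ^ 2 + b ^ 2 * Y ω ^ 2 + c ^ 2 * Z ω ^ 2 + d ^ 2 * W ω ^ 2 +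
          2 * a * b * (X ω * Y ω) + 2 * a * c * (X ω * Z ω) + 2 * a * d * (X ω * W ω) +
          2 * b * c * (Y ω * Z ω) + 2 * b * d * (Y ω * W ω) +
          2 * c * d * (Z ω * W ω) ∂P := by
        congr 1; funext ω; ring
    _ = _ := by simp (disch := fun_prop) only [integral_add, integral_const_mul]

lemma integral_mul_mul_mul_eq_polarization (hX : MemLp X 4 P) (hY : MemLp Y 4 P)
    (hZ : MemLp Z 4 P) (hW : MemLp W 4 P) :
    192 * ∫ ω, X ω * Y ω * Z ω * W ω ∂P =
      ∫ ω, (1 * X ω + 1 * Y ω + 1 * Z ω + 1 * W ω) ^ 4 ∂P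
        + ∫ ω, (1 * X ω + 1 * Y ω + (-1) * Z ω + (-1) * W ω) ^ 4 ∂P
        + ∫ ω, (1 * X ω + (-1) * Y ω + 1 * Z ω + (-1) * W ω) ^ 4 ∂P
        + ∫ ω, (1 * X ω + (-1) * Y ω + (-1) * Z ω + 1 * W ω) ^ 4 ∂P
        - ∫ ω, (1 * X ω + 1 * Y ω + 1 * Z ω + (-1) * W ω) ^ 4 ∂P
        - ∫ ω, (1 * X ω + 1 * Y ω + (-1) * Z ω + 1 * W ω) ^ 4 ∂P
        - ∫ ω, (1 * X ω + (-1) * Y ω + 1 * Z ω + 1 * W ω) ^ 4 ∂P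
        - ∫ ω, (1 * X ω + (-1) * Y ω + (-1) * Z ω + (-1) * W ω) ^ 4 ∂P := by
  have hL (a b c d : ℝ) :
      Integrable (fun ω => (a * X ω + b * Y ω + c * Z ω + d * W ω) ^ 4) P :=
    MemLp.integrable_pow_of_even (by decide) (by norm_num)
      ((((hX.const_mul a).add (hY.const_mul b)).add (hZ.const_mul c)).add (hW.const_mul d))
  have := hL 1 1 1 1
  have := hL 1 1 (-1) (-1)
  have := hL 1 (-1) 1 (-1)
  have := hL 1 (-1) (-1) 1
  have := hL 1 1 1 (-1)
  have := hL 1 1 (-1) 1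
  have := hL 1 (-1) 1 1
  have := hL 1 (-1) (-1) (-1)
  rw [← integral_const_mul]
  calc _ = ∫ ω, (1 * X ω + 1 * Y ω + 1 * Z ω + 1 * W ω) ^ 4
        + (1 * X ω + 1 * Y ω + (-1) * Z ω + (-1) * W ω) ^ 4
        + (1 * X ω + (-1) * Y ω + 1 * Z ω + (-1) * W ω) ^ 4
        + (1 * X ω + (-1) * Y ω + (-1) * Z ω + 1 * W ω) ^ 4
        - (1 * X ω + 1 * Y ω + 1 * Z ω + (-1) * W ω) ^ 4
        - (1 * X ω + 1 * Y ω + (-1) * Z ω + 1 * W ω) ^ 4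
        - (1 * X ω + (-1) * Y ω + 1 * Z ω + 1 * W ω) ^ 4
        - (1 * X ω + (-1) * Y ω + (-1) * Z ω + (-1) * W ω) ^ 4 ∂P := by
        congr 1; funext ω; ring
    _ = _ := by simp (disch := fun_prop) only [integral_add, integral_sub]

end RandomVariables

theorem stmt2_general {Ω : Type*} [MeasurableSpace Ω] (P : Measure Ω)
    (X Y Z W : Ω → ℝ)
    (hGauss : ∀ a b c d : ℝ, ∃ v : NNReal,
      Measure.map (fun ω => a * X ω + b * Y ω + c * Z ω + d * W ω) P = gaussianReal 0 v) :
    ∫ ω, X ω * Y ω * Z ω * W ω ∂P =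
      (∫ ω, X ω * Y ω ∂P) * (∫ ω, Z ω * W ω ∂P) +
      (∫ ω, X ω * Z ω ∂P) * (∫ ω, Y ω * W ω ∂P) +
      (∫ ω, X ω * W ω ∂P) * (∫ ω, Y ω * Z ω ∂P) := by
  have hmem (a b c d : ℝ) {p : ℝ≥0∞} (hp : p ≠ ∞) :
      MemLp (fun ω => a * X ω + b * Y ω + c * Z ω + d * W ω) p P :=
    (hGauss a b c d).elim fun _ hv => memLp_of_map_eq_gaussianReal hv hp
  have hX {p : ℝ≥0∞} (hp : p ≠ ∞) : MemLp X p P := by simpa using hmem 1 0 0 0 hp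
  have hY {p : ℝ≥0∞} (hp : p ≠ ∞) : MemLp Y p P := by simpa using hmem 0 1 0 0 hp
  have hZ {p : ℝ≥0∞} (hp : p ≠ ∞) : MemLp Z p P := by simpa using hmem 0 0 1 0 hp
  have hW {p : ℝ≥0∞} (hp : p ≠ ∞) : MemLp W p P := by simpa using hmem 0 0 0 1 hp
  have hfourth (a b c d : ℝ) := (hGauss a b c d).elim fun _ hv =>
    integral_pow_four_eq_three_mul_sq_of_map_eq_gaussianReal hv
  have key := integral_mul_mul_mul_eq_polarization (hX (by simp)) (hY (by simp)) (hZ (by simp))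
    (hW (by simp))
  simp only [hfourth, integral_sq_linear_combination (hX (by simp)) (hY (by simp))
    (hZ (by simp)) (hW (by simp))] at key
  linear_combination key / 192

/-- Isserlis' formula for four centered jointly Gaussian real random variables.
Joint Gaussianity is expressed by requiring every linear combination to be a
centered real Gaussian. -/
theorem stmt2 {Ω : Type*} [MeasurableSpace Ω] (P : Measure Ω) [IsProbabilityMeasure P]
    (X Y Z W : Ω → ℝ)
    (hX : Measurable X) (hY : Measurable Y) (hZ : Measurable Z) (hW : Measurable W)
    (hGauss : ∀ a b c d : ℝ, ∃ v : NNReal,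
      Measure.map (fun ω => a * X ω + b * Y ω + c * Z ω + d * W ω) P = gaussianReal 0 v)
    (hint4 : Integrable (fun ω => X ω * Y ω * Z ω * W ω) P)
    (hXY : Integrable (fun ω => X ω * Y ω) P)
    (hXZ : Integrable (fun ω => X ω * Z ω) P)
    (hXW : Integrable (fun ω => X ω * W ω) P)
    (hYZ : Integrable (fun ω => Y ω * Z ω) P)
    (hYW : Integrable (fun ω => Y ω * W ω) P)
    (hZW : Integrable (fun ω => Z ω * W ω) P) :
    ∫ ω, X ω * Y ω * Z ω * W ω ∂P =
      (∫ ω, X ω * Y ω ∂P) * (∫ ω, Z ω * W ω ∂P) +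
      (∫ ω, X ω * Z ω ∂P) * (∫ ω, Y ω * W ω ∂P) +
      (∫ ω, X ω * W ω ∂P) * (∫ ω, Y ω * Z ω ∂P) :=
  stmt2_general P X Y Z W hGauss
end

section
/- Let v ∈ C²([0,∞) × ℝ) satisfy ∂_t²v = (1/A)∂_x(A ∂_x v) on (0,∞) × ℝ with A : ℝ → (0,∞) smooth, suppose v vanishes on the wedge {(x,t) : t < x}, and suppose either v(0,t) = 0 for all t or ∂_x v(0,t) = 0 for all t. Define E(t) = (1/2)∫₀ᵗ [(∂_t v(x,t))² + (∂_x v(x,t))²] A(x) dx for t ≥ 0. Then E'(t) = 0 for all t > 0, hence E(t) = 0 for all t ≥ 0, and consequently v ≡ 0 on {(x,t) : 0 < x < t}. -/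
open MeasureTheory intervalIntegral

theorem stmt11 (v : ℝ → ℝ → ℝ) (A : ℝ → ℝ) (E : ℝ → ℝ)
    (hv : ContDiff ℝ 2 (fun p : ℝ × ℝ => v p.1 p.2))
    (hA : ContDiff ℝ (⊤ : ℕ∞) A) (hApos : ∀ x, 0 < A x)
    (hPDE : ∀ x t, 0 < x →
      deriv (fun t' => deriv (fun t'' => v x t'') t') t =
        deriv (fun y => deriv (fun y' => v y' t) y) x +
          (deriv A x / A x) * deriv (fun y => v y t) x)
    (hwedge : ∀ x t, 0 < x → t < x → v x t = 0)
    (hbdry : (∀ t, v 0 t = 0) ∨ (∀ t, deriv (fun y => v y t) 0 = 0))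
    (hE : ∀ t, E t = (1 / 2) * ∫ x in (0:ℝ)..t,
      ((deriv (fun t' => v x t') t) ^ 2 + (deriv (fun y => v y t) x) ^ 2) * A x) :
    (∀ t > (0:ℝ), deriv E t = 0) ∧
    (∀ t ≥ (0:ℝ), E t = 0) ∧
    (∀ x t : ℝ, 0 < x → x < t → v x t = 0) := by
  classical
  set V : ℝ × ℝ → ℝ := fun p => v p.1 p.2 with hVdef
  have hVd : Differentiable ℝ V := hv.differentiable (by norm_num)
  set W1 : ℝ × ℝ → ℝ := fun p => fderiv ℝ V p (0, 1) with hW1def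
  set W0 : ℝ × ℝ → ℝ := fun p => fderiv ℝ V p (1, 0) with hW0def
  have hline_t : ∀ x t : ℝ, HasDerivAt (fun s : ℝ => ((x, s) : ℝ × ℝ)) ((0, 1) : ℝ × ℝ) t :=
    fun x t => (hasDerivAt_const t x).prodMk (hasDerivAt_id t)
  have hline_x : ∀ x t : ℝ, HasDerivAt (fun y : ℝ => ((y, t) : ℝ × ℝ)) ((1, 0) : ℝ × ℝ) x :=
    fun x t => (hasDerivAt_id x).prodMk (hasDerivAt_const x t)
  have hDt : ∀ x t : ℝ, HasDerivAt (fun s => v x s) (W1 (x, t)) t := fun x t =>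
    (hVd (x, t)).hasFDerivAt.comp_hasDerivAt t (hline_t x t)
  have hDx : ∀ x t : ℝ, HasDerivAt (fun y => v y t) (W0 (x, t)) x := fun x t =>
    (hVd (x, t)).hasFDerivAt.comp_hasDerivAt (f := fun y : ℝ => ((y, t) : ℝ × ℝ)) x (hline_x x t)
  have hvt : ∀ x t : ℝ, deriv (fun s => v x s) t = W1 (x, t) := fun x t => (hDt x t).deriv
  have hvx : ∀ x t : ℝ, deriv (fun y => v y t) x = W0 (x, t) := fun x t => (hDx x t).deriv
  have hfd : ContDiff ℝ 1 (fderiv ℝ V) := hv.fderiv_right (by norm_num)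
  have hW1s : ContDiff ℝ 1 W1 := hfd.clm_apply contDiff_const
  have hW0s : ContDiff ℝ 1 W0 := hfd.clm_apply contDiff_const
  have hW1d : Differentiable ℝ W1 := hW1s.differentiable (by norm_num)
  have hW0d : Differentiable ℝ W0 := hW0s.differentiable (by norm_num)
  have hW1c : Continuous W1 := hW1s.continuous
  have hW0c : Continuous W0 := hW0s.continuous
  have hW1t : ∀ x t : ℝ, HasDerivAt (fun s => W1 (x, s)) (fderiv ℝ W1 (x, t) (0, 1)) t :=
    fun x t => (hW1d (x, t)).hasFDerivAt.comp_hasDerivAt t (hline_t x t)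
  have hW1x : ∀ x t : ℝ, HasDerivAt (fun y => W1 (y, t)) (fderiv ℝ W1 (x, t) (1, 0)) x :=
    fun x t => (hW1d (x, t)).hasFDerivAt.comp_hasDerivAt (f := fun y : ℝ => ((y, t) : ℝ × ℝ)) x (hline_x x t)
  have hW0t : ∀ x t : ℝ, HasDerivAt (fun s => W0 (x, s)) (fderiv ℝ W0 (x, t) (0, 1)) t :=
    fun x t => (hW0d (x, t)).hasFDerivAt.comp_hasDerivAt t (hline_t x t)
  have hW0x : ∀ x t : ℝ, HasDerivAt (fun y => W0 (y, t)) (fderiv ℝ W0 (x, t) (1, 0)) x :=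
    fun x t => (hW0d (x, t)).hasFDerivAt.comp_hasDerivAt (f := fun y : ℝ => ((y, t) : ℝ × ℝ)) x (hline_x x t)
  -- Schwarz symmetry
  have hSchwarz : ∀ p : ℝ × ℝ, fderiv ℝ W0 p (0, 1) = fderiv ℝ W1 p (1, 0) := by
    intro p
    have h1 : ∀ q, HasFDerivAt V (fderiv ℝ V q) q := fun q => (hVd q).hasFDerivAt
    have h2 : HasFDerivAt (fderiv ℝ V) (fderiv ℝ (fderiv ℝ V) p) p :=
      ((hfd.differentiable (by norm_num)) p).hasFDerivAt
    have hsym := second_derivative_symmetric h1 h2 ((0, 1) : ℝ × ℝ) ((1, 0) : ℝ × ℝ)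
    have e0 : fderiv ℝ W0 p = (fderiv ℝ (fderiv ℝ V) p).flip ((1, 0) : ℝ × ℝ) := by
      have h := fderiv_clm_apply (c := fderiv ℝ V) (u := fun _ => ((1 : ℝ), (0 : ℝ)))
        ((hfd.differentiable (by norm_num)) p) (differentiableAt_const _)
      simpa using h
    have e1 : fderiv ℝ W1 p = (fderiv ℝ (fderiv ℝ V) p).flip ((0, 1) : ℝ × ℝ) := by
      have h := fderiv_clm_apply (c := fderiv ℝ V) (u := fun _ => ((0 : ℝ), (1 : ℝ)))
        ((hfd.differentiable (by norm_num)) p) (differentiableAt_const _)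
      simpa using h
    rw [e0, e1]
    simpa using hsym
  -- limit helper
  have hlim : ∀ (g : ℝ → ℝ) (x : ℝ) (l : Filter ℝ), l.NeBot → l ≤ nhds x → Continuous g →
      (∀ᶠ s in l, g s = 0) → g x = 0 := by
    intro g x l hne hle hg h0
    haveI := hne
    have h1 : Filter.Tendsto g l (nhds (g x)) := (hg.tendsto x).mono_left hle
    have h2 : Filter.Tendsto g l (nhds 0) :=
      Filter.Tendsto.congr' (h0.mono fun s hs => hs.symm) tendsto_const_nhds
    exact tendsto_nhds_unique h1 h2
  -- vanishing on the open wedge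
  have hUopen : IsOpen {p : ℝ × ℝ | 0 < p.1 ∧ p.2 < p.1} :=
    (isOpen_lt continuous_const continuous_fst).inter (isOpen_lt continuous_snd continuous_fst)
  have hWwedge : ∀ x t : ℝ, 0 < x → t < x → W1 (x, t) = 0 ∧ W0 (x, t) = 0 := by
    intro x t hx htx
    have hmem : {p : ℝ × ℝ | 0 < p.1 ∧ p.2 < p.1} ∈ nhds ((x, t) : ℝ × ℝ) :=
      hUopen.mem_nhds ⟨hx, htx⟩
    have heq : V =ᶠ[nhds ((x, t) : ℝ × ℝ)] fun _ => (0 : ℝ) := by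
      filter_upwards [hmem] with p hp
      exact hwedge p.1 p.2 hp.1 hp.2
    have hf0 : fderiv ℝ V (x, t) = fderiv ℝ (fun _ : ℝ × ℝ => (0 : ℝ)) (x, t) := heq.fderiv_eq
    constructor
    · show (fderiv ℝ V (x, t)) (0, 1) = 0
      rw [hf0]; simp
    · show (fderiv ℝ V (x, t)) (1, 0) = 0
      rw [hf0]; simp
  have hW1diag : ∀ x t : ℝ, 0 < x → t ≤ x → W1 (x, t) = 0 := by
    intro x t hx ht
    rcases lt_or_eq_of_le ht with h | h
    · exact (hWwedge x t hx h).1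
    · subst h
      exact hlim (fun s => W1 (t, s)) t (nhdsWithin t (Set.Iio t)) inferInstance
        nhdsWithin_le_nhds (hW1c.comp (continuous_const.prodMk continuous_id))
        (by filter_upwards [self_mem_nhdsWithin] with s hs
            exact (hWwedge t s hx hs).1)
  have hW0diag : ∀ x t : ℝ, 0 < x → t ≤ x → W0 (x, t) = 0 := by
    intro x t hx ht
    rcases lt_or_eq_of_le ht with h | h
    · exact (hWwedge x t hx h).2
    · subst h
      exact hlim (fun y => W0 (y, t)) t (nhdsWithin t (Set.Ioi t)) inferInstance
        nhdsWithin_le_nhds (hW0c.comp (continuous_id.prodMk continuous_const))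
        (by filter_upwards [self_mem_nhdsWithin] with y hy
            exact (hWwedge y t (hx.trans hy) hy).2)
  have hvdiag : ∀ x : ℝ, 0 < x → v x x = 0 := by
    intro x hx
    exact hlim (fun s => v x s) x (nhdsWithin x (Set.Iio x)) inferInstance
      nhdsWithin_le_nhds (hv.continuous.comp (continuous_const.prodMk continuous_id))
      (by filter_upwards [self_mem_nhdsWithin] with s hs
          exact hwedge x s hx hs)
  -- the energy integrand and its time derivative
  set f : ℝ → ℝ → ℝ := fun x t => (W1 (x, t) ^ 2 + W0 (x, t) ^ 2) * A x with hfdef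
  set g : ℝ → ℝ → ℝ := fun x t =>
    (2 * W1 (x, t) * fderiv ℝ W1 (x, t) (0, 1) + 2 * W0 (x, t) * fderiv ℝ W0 (x, t) (0, 1)) * A x
    with hgdef
  have hfc : Continuous (fun p : ℝ × ℝ => f p.1 p.2) := by
    have : (fun p : ℝ × ℝ => f p.1 p.2) = fun p : ℝ × ℝ => (W1 p ^ 2 + W0 p ^ 2) * A p.1 := rfl
    rw [this]
    exact ((hW1c.pow 2).add (hW0c.pow 2)).mul (hA.continuous.comp continuous_fst)
  have hgc : Continuous (fun p : ℝ × ℝ => g p.1 p.2) := by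
    have h1 : Continuous (fun p : ℝ × ℝ => fderiv ℝ W1 p (0, 1)) :=
      (hW1s.continuous_fderiv (by norm_num)).clm_apply continuous_const
    have h0 : Continuous (fun p : ℝ × ℝ => fderiv ℝ W0 p (0, 1)) :=
      (hW0s.continuous_fderiv (by norm_num)).clm_apply continuous_const
    have : (fun p : ℝ × ℝ => g p.1 p.2) = fun p : ℝ × ℝ =>
        (2 * W1 p * fderiv ℝ W1 p (0, 1) + 2 * W0 p * fderiv ℝ W0 p (0, 1)) * A p.1 := rfl
    rw [this]
    exact (((continuous_const.mul hW1c).mul h1).add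
      ((continuous_const.mul hW0c).mul h0)).mul (hA.continuous.comp continuous_fst)
  have hfslice : ∀ t : ℝ, Continuous (fun x => f x t) := fun t =>
    hfc.comp (continuous_id.prodMk continuous_const)
  have hgslice : ∀ t : ℝ, Continuous (fun x => g x t) := fun t =>
    hgc.comp (continuous_id.prodMk continuous_const)
  have hft : ∀ x t : ℝ, HasDerivAt (fun s => f x s) (g x t) t := by
    intro x t
    have h := (((hW1t x t).pow 2).add ((hW0t x t).pow 2)).mul_const (A x)
    refine h.congr_deriv ?_
    push_cast
    show _ = (2 * W1 (x, t) * fderiv ℝ W1 (x, t) (0, 1) + 2 * W0 (x, t) * fderiv ℝ W0 (x, t) (0, 1)) * A x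
    norm_num
  have hfE : ∀ t, E t = (1 / 2) * ∫ x in (0:ℝ)..t, f x t := by
    intro t
    rw [hE t]
    congr 1
    have : (fun x => ((deriv (fun t' => v x t') t) ^ 2 + (deriv (fun y => v y t) x) ^ 2) * A x)
        = fun x => f x t := by
      funext x
      rw [hvt, hvx]
    rw [this]
  have hfzero : ∀ x t : ℝ, 0 < x → t ≤ x → f x t = 0 := by
    intro x t hx ht
    have h1 := hW1diag x t hx ht
    have h0 := hW0diag x t hx ht
    show (W1 (x, t) ^ 2 + W0 (x, t) ^ 2) * A x = 0
    rw [h1, h0]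
    ring
  have hfnonneg : ∀ x t : ℝ, 0 ≤ f x t := by
    intro x t
    have := (hApos x).le
    show 0 ≤ (W1 (x, t) ^ 2 + W0 (x, t) ^ 2) * A x
    positivity
  -- PDE in terms of W0, W1
  have hPDE' : ∀ x t : ℝ, 0 < x →
      fderiv ℝ W1 (x, t) (0, 1) = fderiv ℝ W0 (x, t) (1, 0) + (deriv A x / A x) * W0 (x, t) := by
    intro x t hx
    have h := hPDE x t hx
    have e1 : (fun t' => deriv (fun t'' => v x t'') t') = fun t' => W1 (x, t') :=
      funext fun t' => hvt x t'
    have e2 : (fun y => deriv (fun y' => v y' t) y) = fun y => W0 (y, t) :=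
      funext fun y => hvx y t
    rw [e1, e2, hvx, (hW1t x t).deriv, (hW0x x t).deriv] at h
    exact h
  -- boundary vanishing
  have hbdry' : ∀ t : ℝ, W0 (0, t) * W1 (0, t) = 0 := by
    intro t
    rcases hbdry with hb | hb
    · have : (fun s => v 0 s) = fun _ => (0 : ℝ) := funext fun s => hb s
      have h1 : W1 (0, t) = 0 := by
        rw [← hvt 0 t, this, deriv_const]
      rw [h1, mul_zero]
    · have h0 : W0 (0, t) = 0 := by rw [← hvx 0 t]; exact hb t
      rw [h0, zero_mul]
  -- main derivative computation
  have hEderiv : ∀ t₀ : ℝ, 0 < t₀ → HasDerivAt E 0 t₀ := by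
    intro t₀ ht₀
    set T : ℝ := t₀ + 1 with hTdef
    have hT : 0 < T := by linarith
    have ht₀T : t₀ < T := by linarith
    -- E agrees with a fixed-endpoint integral on (0, T)
    have hext : ∀ t ∈ Set.Ioo (0:ℝ) T, E t = (1 / 2) * ∫ x in (0:ℝ)..T, f x t := by
      intro t ht
      rw [hfE t]
      congr 1
      have hint1 : IntervalIntegrable (fun x => f x t) volume 0 t :=
        (hfslice t).intervalIntegrable 0 t
      have hint2 : IntervalIntegrable (fun x => f x t) volume t T :=
        (hfslice t).intervalIntegrable t T
      have hzero2 : ∫ x in t..T, f x t = 0 := by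
        have : Set.EqOn (fun x => f x t) (fun _ => (0:ℝ)) (Set.uIcc t T) := by
          intro x hx
          rw [Set.uIcc_of_le ht.2.le] at hx
          exact hfzero x t (lt_of_lt_of_le ht.1 hx.1) hx.1
        rw [intervalIntegral.integral_congr this, intervalIntegral.integral_zero]
      have hadd := intervalIntegral.integral_add_adjacent_intervals hint1 hint2
      rw [hzero2] at hadd
      linarith
    -- dominated differentiation under the integral sign
    obtain ⟨C, hC⟩ := (isCompact_Icc.prod isCompact_Icc :
        IsCompact (Set.Icc (0:ℝ) T ×ˢ Set.Icc (t₀ - 1) (t₀ + 1))).exists_bound_of_continuousOn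
      hgc.continuousOn
    have key := intervalIntegral.hasDerivAt_integral_of_dominated_loc_of_deriv_le
      (F := fun t x => f x t) (F' := fun t x => g x t) (x₀ := t₀) (s := Metric.ball t₀ 1) (a := (0:ℝ)) (b := T)
      (μ := volume) (bound := fun _ => C) (Metric.ball_mem_nhds t₀ one_pos)
      (Filter.Eventually.of_forall fun t => (hfslice t).aestronglyMeasurable)
      ((hfslice t₀).intervalIntegrable 0 T)
      ((hgslice t₀).aestronglyMeasurable)
      ?_ (intervalIntegrable_const) ?_
    rotate_left
    · refine Filter.Eventually.of_forall fun x hx => ?_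
      intro t htb
      rw [Set.uIoc_of_le hT.le] at hx
      have h1 : x ∈ Set.Icc (0:ℝ) T := ⟨hx.1.le, hx.2⟩
      have h2 : t ∈ Set.Icc (t₀ - 1) (t₀ + 1) := by
        have := Metric.mem_ball.1 htb
        rw [Real.dist_eq] at this
        constructor <;> [linarith [abs_lt.1 this]; linarith [abs_lt.1 this]]
      exact hC (x, t) ⟨h1, h2⟩
    · exact Filter.Eventually.of_forall fun x _ => fun t _ => hft x t
    · -- the integral of g  at time t₀ vanishes by FTC
      have hderint : (∫ x in (0:ℝ)..T, g x t₀) = 0 := by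
        set G : ℝ → ℝ := fun x => A x * (W0 (x, t₀) * W1 (x, t₀)) with hGdef
        set G' : ℝ → ℝ := fun x => deriv A x * (W0 (x, t₀) * W1 (x, t₀)) +
          A x * (fderiv ℝ W0 (x, t₀) (1, 0) * W1 (x, t₀) +
            W0 (x, t₀) * fderiv ℝ W1 (x, t₀) (1, 0)) with hG'def
        have hG : ∀ x, HasDerivAt G (G' x) x := fun x =>
          ((hA.differentiable (by simp) x).hasDerivAt).mul ((hW0x x t₀).mul (hW1x x t₀))
        have hG'c : Continuous G' := by
          have hd1 : Continuous (fun x : ℝ => fderiv ℝ W1 (x, t₀) (1, 0)) :=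
            ((hW1s.continuous_fderiv (by norm_num)).clm_apply continuous_const).comp
              (continuous_id.prodMk continuous_const)
          have hd0 : Continuous (fun x : ℝ => fderiv ℝ W0 (x, t₀) (1, 0)) :=
            ((hW0s.continuous_fderiv (by norm_num)).clm_apply continuous_const).comp
              (continuous_id.prodMk continuous_const)
          have hw1 : Continuous (fun x : ℝ => W1 (x, t₀)) :=
            hW1c.comp (continuous_id.prodMk continuous_const)
          have hw0 : Continuous (fun x : ℝ => W0 (x, t₀)) :=
            hW0c.comp (continuous_id.prodMk continuous_const)
          exact ((hA.continuous_deriv (by simp)).mul (hw0.mul hw1)).add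
            (hA.continuous.mul ((hd0.mul hw1).add (hw0.mul hd1)))
        have hcong : ∫ x in (0:ℝ)..T, g x t₀ = ∫ x in (0:ℝ)..T, 2 * G' x := by
          apply intervalIntegral.integral_congr_ae
          refine Filter.Eventually.of_forall fun x hx => ?_
          rw [Set.uIoc_of_le hT.le] at hx
          have hxpos : 0 < x := hx.1
          have hp := hPDE' x t₀ hxpos
          have hs := hSchwarz (x, t₀)
          have hAx : A x ≠ 0 := (hApos x).ne'
          show (2 * W1 (x, t₀) * fderiv ℝ W1 (x, t₀) (0, 1) +
              2 * W0 (x, t₀) * fderiv ℝ W0 (x, t₀) (0, 1)) * A x = 2 * G' x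
          rw [hp, hs, hG'def]
          field_simp
          ring
        have hftc := intervalIntegral.integral_eq_sub_of_hasDerivAt
          (f := G) (f' := G') (a := 0) (b := T) (fun x _ => hG x)
          (hG'c.intervalIntegrable 0 T)
        have hGT : G T = 0 := by
          show A T * (W0 (T, t₀) * W1 (T, t₀)) = 0
          rw [hW1diag T t₀ hT ht₀T.le, mul_zero, mul_zero]
        have hG0 : G 0 = 0 := by
          show A 0 * (W0 (0, t₀) * W1 (0, t₀)) = 0
          rw [hbdry' t₀, mul_zero]
        rw [hcong, intervalIntegral.integral_const_mul, hftc, hGT, hG0]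
        ring
      have hgoal : HasDerivAt (fun t => (1 / 2) * ∫ x in (0:ℝ)..T, f x t)
          ((1 / 2) * ∫ x in (0:ℝ)..T, g x t₀) t₀ := key.2.const_mul (1 / 2)
      rw [hderint, mul_zero] at hgoal
      apply hgoal.congr_of_eventuallyEq
      have hmem : Set.Ioo (0:ℝ) T ∈ nhds t₀ := isOpen_Ioo.mem_nhds ⟨ht₀, ht₀T⟩
      filter_upwards [hmem] with t ht
      exact hext t ht
  have c1 : ∀ t > (0:ℝ), deriv E t = 0 := fun t ht => (hEderiv t ht).deriv
  -- E vanishes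
  have c2 : ∀ t ≥ (0:ℝ), E t = 0 := by
    intro t ht
    rcases eq_or_lt_of_le ht with h | h
    · rw [hfE t, ← h, intervalIntegral.integral_same, mul_zero]
    · -- E is constant on (0, t]
      have hconst : ∀ ε ∈ Set.Ioc (0:ℝ) t, E t = E ε := by
        intro ε hε
        have hcont : ContinuousOn E (Set.Icc ε t) := fun s hs =>
          ((hEderiv s (lt_of_lt_of_le hε.1 hs.1)).continuousAt).continuousWithinAt
        have hder : ∀ s ∈ Set.Ico ε t, HasDerivWithinAt E 0 (Set.Ici s) s := fun s hs =>
          (hEderiv s (lt_of_lt_of_le hε.1 hs.1)).hasDerivWithinAt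
        exact constant_of_has_deriv_right_zero hcont hder t (Set.right_mem_Icc.2 hε.2)
      obtain ⟨C, hC⟩ := (isCompact_Icc.prod isCompact_Icc :
          IsCompact (Set.Icc (0:ℝ) t ×ˢ Set.Icc (0:ℝ) t)).exists_bound_of_continuousOn
        hfc.continuousOn
      have hC0 : 0 ≤ C := le_trans (norm_nonneg _) (hC (0, 0) ⟨⟨le_rfl, ht⟩, ⟨le_rfl, ht⟩⟩)
      have hEbound : ∀ ε ∈ Set.Ioc (0:ℝ) t, E ε ≤ (1 / 2) * (C * ε) := by
        intro ε hε
        rw [hfE ε]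
        have hmono : (∫ x in (0:ℝ)..ε, f x ε) ≤ ∫ _x in (0:ℝ)..ε, C := by
          apply intervalIntegral.integral_mono_on hε.1.le
            ((hfslice ε).intervalIntegrable 0 ε) intervalIntegrable_const
          intro x hx
          have := hC (x, ε) ⟨⟨hx.1, hx.2.trans hε.2⟩, ⟨hε.1.le, hε.2⟩⟩
          rw [Real.norm_eq_abs, abs_of_nonneg (hfnonneg x ε)] at this
          exact this
        rw [intervalIntegral.integral_const, smul_eq_mul, sub_zero] at hmono
        nlinarith
      have hEnn : 0 ≤ E t := by
        rw [hfE t]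
        have : 0 ≤ ∫ x in (0:ℝ)..t, f x t :=
          intervalIntegral.integral_nonneg ht (fun x _ => hfnonneg x t)
        linarith
      by_contra hne
      have hpos : 0 < E t := lt_of_le_of_ne hEnn (Ne.symm hne)
      set ε : ℝ := min t (E t / (C + 1)) with hεdef
      have hε1 : 0 < ε := lt_min h (div_pos hpos (by linarith))
      have hε2 : ε ≤ t := min_le_left _ _
      have hε3 : ε ≤ E t / (C + 1) := min_le_right _ _
      have h4 := hEbound ε ⟨hε1, hε2⟩
      have h5 := hconst ε ⟨hε1, hε2⟩
      have h6 : ε * (C + 1) ≤ E t := by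
        rw [← le_div_iff₀ (by linarith : (0:ℝ) < C + 1)] at *
        exact hε3
      nlinarith
  -- pointwise vanishing of the time derivative inside the cone
  have hWzero : ∀ τ x : ℝ, 0 < x → x < τ → W1 (x, τ) = 0 := by
    intro τ x hx hxτ
    have hτ : 0 < τ := hx.trans hxτ
    have hI : (∫ y in (0:ℝ)..τ, f y τ) = 0 := by
      have := c2 τ hτ.le
      rw [hfE τ] at this
      linarith
    have hf0 : f x τ = 0 := by
      by_contra hne
      have hfx : 0 < f x τ := lt_of_le_of_ne (hfnonneg x τ) (Ne.symm hne)
      set U : Set ℝ := (fun y => f y τ) ⁻¹' Set.Ioi 0 with hUdef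
      have hUo : IsOpen U := (hfslice τ).isOpen_preimage _ isOpen_Ioi
      have hxU : x ∈ U := hfx
      obtain ⟨δ, hδpos, hδ⟩ := Metric.isOpen_iff.1 hUo x hxU
      set r : ℝ := min δ (min x (τ - x)) with hrdef
      have hrpos : 0 < r := lt_min hδpos (lt_min hx (by linarith))
      have hsub : Metric.ball x r ⊆ Function.support (fun y => f y τ) ∩ Set.Ioc 0 τ := by
        intro y hy
        rw [Metric.mem_ball, Real.dist_eq] at hy
        have h1 := abs_lt.1 hy
        have hry : r ≤ δ := min_le_left _ _
        have hrx : r ≤ x := le_trans (min_le_right _ _) (min_le_left _ _)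
        have hrτ : r ≤ τ - x := le_trans (min_le_right _ _) (min_le_right _ _)
        refine ⟨?_, ⟨by linarith, by linarith⟩⟩
        have : y ∈ U := hδ (by rw [Metric.mem_ball, Real.dist_eq]; linarith [abs_lt.2 ⟨h1.1, h1.2⟩])
        exact ne_of_gt this
      have hmeas : 0 < volume (Function.support (fun y => f y τ) ∩ Set.Ioc 0 τ) :=
        lt_of_lt_of_le (Metric.measure_ball_pos volume x hrpos) (measure_mono hsub)
      have hposint : 0 < ∫ y in (0:ℝ)..τ, f y τ :=
        (intervalIntegral.integral_pos_iff_support_of_nonneg_ae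
          (Filter.Eventually.of_forall (fun y => hfnonneg y τ))
          ((hfslice τ).intervalIntegrable 0 τ)).2 ⟨hτ, hmeas⟩
      rw [hI] at hposint
      exact lt_irrefl 0 hposint
    have hAx : 0 < A x := hApos x
    have hsq : W1 (x, τ) ^ 2 + W0 (x, τ) ^ 2 = 0 := by
      have : (W1 (x, τ) ^ 2 + W0 (x, τ) ^ 2) * A x = 0 := hf0
      exact (mul_eq_zero.1 this).resolve_right hAx.ne'
    nlinarith [sq_nonneg (W1 (x, τ)), sq_nonneg (W0 (x, τ))]
  have c3 : ∀ x t : ℝ, 0 < x → x < t → v x t = 0 := by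
    intro x t hx hxt
    have hcont : ContinuousOn (fun s => v x s) (Set.Icc x t) :=
      (hv.continuous.comp (continuous_const.prodMk continuous_id)).continuousOn
    have hder : ∀ s ∈ Set.Ico x t, HasDerivWithinAt (fun s => v x s) 0 (Set.Ici s) s := by
      intro s hs
      have h0 : W1 (x, s) = 0 := by
        rcases eq_or_lt_of_le hs.1 with h | h
        · rw [← h]; exact hW1diag x x hx le_rfl
        · exact hWzero s x hx h
      have := hDt x s
      rw [h0] at this
      exact this.hasDerivWithinAt
    have := constant_of_has_deriv_right_zero hcont hder t (Set.right_mem_Icc.2 hxt.le)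
    simpa [hvdiag x hx] using this
  exact ⟨c1, c2, c3⟩
end
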